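/- arXiv:1509.03157 — 4 statements merged into one kernel-verified Lean document; each statement's English description precedes it below -/
import Mathlib

section
/- If subspaces V_1, ..., V_n of a finite-dimensional vector space V generate a distributive lattice (under sum and intersection), then there exists a basis B of V such that each V_i is spanned by a subset of B. -/
/-!
Adjoining `⊥` and `⊤` keeps the generated lattice distributive, and a finitely generated
distributive lattice `L` is finite, each element being a join of meets of generators. For every
sup-irreducible `J ∈ L` choose a linearly independent set `C J` spanning a complement, inside `J`,
of the sum of the members of `L` strictly below `J`; by well-founded induction each `X ∈ L` is
spanned by the `C J` with `J ≤ X`. The union of all `C J` is linearly independent because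
sup-irreducibles of a distributive lattice are sup-prime: if `J` is maximal among finitely many
sup-irreducibles and `T` is the join of the others, then `J ⊓ T < J`, so `J ⊓ T` lies in the sum
of the members below `J`, which meets the span of `C J` only in `0`.
-/

/-- Membership in the sublattice generated by a set of elements of a lattice. -/
inductive MemLatGen {α : Type*} [Lattice α] (S : Set α) : α → Prop
  | base {a : α} : a ∈ S → MemLatGen S a
  | sup {a b : α} : MemLatGen S a → MemLatGen S b → MemLatGen S (a ⊔ b)
  | inf {a b : α} : MemLatGen S a → MemLatGen S b → MemLatGen S (a ⊓ b)

/-- A family of elements of a lattice generates a distributive lattice. -/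
def IsDistribFamily {α : Type*} [Lattice α] (S : Set α) : Prop :=
  ∀ a b c : α, MemLatGen S a → MemLatGen S b → MemLatGen S c →
    a ⊓ (b ⊔ c) = (a ⊓ b) ⊔ (a ⊓ c)

open Submodule (span span_eq span_le span_mono)

section MemLatGen

variable {α : Type*}

def MemLatGen.sublattice [Lattice α] (S : Set α) : Sublattice α where
  carrier := {x | MemLatGen S x}
  supClosed' _ ha _ hb := .sup ha hb
  infClosed' _ ha _ hb := .inf ha hb

abbrev IsDistribFamily.distribLattice [Lattice α] {S : Set α} (h : IsDistribFamily S) :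
    DistribLattice (MemLatGen.sublattice S) :=
  DistribLattice.ofInfSupLe fun a b c => (h a b c a.2 b.2 c.2).le

theorem MemLatGen.preimage_val [Lattice α] {S : Set α} {x : α} (hx : MemLatGen S x) :
    MemLatGen (Subtype.val ⁻¹' S : Set (MemLatGen.sublattice S)) ⟨x, hx⟩ := by
  induction hx with
  | base h => exact .base h
  | sup _ _ iha ihb => exact .sup iha ihb
  | inf _ _ iha ihb => exact .inf iha ihb

theorem MemLatGen.finite_setOf [DistribLattice α] [BoundedOrder α] {S : Set α} (hS : S.Finite) :
    {x | MemLatGen S x}.Finite := by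
  classical
  have := hS.fintype
  refine (Set.finite_range fun G : Finset (Finset S) => G.sup fun F => F.inf (↑)).subset ?_
  intro x hx
  induction hx with
  | base h => exact ⟨{{⟨_, h⟩}}, by simp⟩
  | sup _ _ iha ihb =>
    obtain ⟨G, rfl⟩ := iha
    obtain ⟨H, rfl⟩ := ihb
    exact ⟨G ∪ H, Finset.sup_union⟩
  | inf _ _ iha ihb =>
    obtain ⟨G, rfl⟩ := iha
    obtain ⟨H, rfl⟩ := ihb
    refine ⟨(G ×ˢ H).image fun p => p.1 ∪ p.2, ?_⟩
    simp [Finset.sup_image, Finset.sup_inf_sup, Finset.inf_union, Function.comp_def]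

theorem MemLatGen.eq_bot_or_eq_top_or_of_insert [Lattice α] [BoundedOrder α] {S : Set α} {x : α}
    (hx : MemLatGen (insert ⊥ (insert ⊤ S)) x) : x = ⊥ ∨ x = ⊤ ∨ MemLatGen S x := by
  induction hx with
  | base h =>
    rcases h with rfl | rfl | h
    · exact Or.inl rfl
    · exact Or.inr (Or.inl rfl)
    · exact Or.inr (Or.inr (.base h))
  | sup _ _ iha ihb =>
    rcases iha with rfl | rfl | ha <;> rcases ihb with rfl | rfl | hb <;>
      first
        | exact Or.inr (Or.inr (.sup ha hb))
        | simp [*]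
  | inf _ _ iha ihb =>
    rcases iha with rfl | rfl | ha <;> rcases ihb with rfl | rfl | hb <;>
      first
        | exact Or.inr (Or.inr (.inf ha hb))
        | simp [*]

theorem IsDistribFamily.insert_bot_top [Lattice α] [BoundedOrder α] {S : Set α}
    (h : IsDistribFamily S) : IsDistribFamily (insert ⊥ (insert ⊤ S)) := by
  intro a b c ha hb hc
  rcases ha.eq_bot_or_eq_top_or_of_insert with rfl | rfl | ha <;>
  rcases hb.eq_bot_or_eq_top_or_of_insert with rfl | rfl | hb <;>
  rcases hc.eq_bot_or_eq_top_or_of_insert with rfl | rfl | hc <;>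
    first
      | simp
      | exact h _ _ _ ha hb hc

end MemLatGen

section AdaptedBasis

variable {k V : Type*} [Field k] [AddCommGroup V] [Module k V]

theorem Submodule.exists_linearIndepOn_disjoint_sup_eq {p q : Submodule k V} (hpq : p ≤ q) :
    ∃ s : Set V, LinearIndepOn k id s ∧ Disjoint p (span k s) ∧ p ⊔ span k s = q := by
  obtain ⟨C, hC⟩ := p.exists_isCompl
  obtain ⟨s, -, hspan, hs⟩ := exists_linearIndependent k ((C ⊓ q : Submodule k V) : Set V)
  rw [span_eq] at hspan
  refine ⟨s, hs, hspan ▸ hC.disjoint.mono_right inf_le_left, ?_⟩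
  rw [hspan, ← sup_inf_assoc_of_le _ hpq, hC.sup_eq_top, top_inf_eq]

def supIrredUnion {L β : Type*} [SemilatticeSup L] (C : L → Set β) (x : L) : Set β :=
  ⋃ (J) (_ : SupIrred J) (_ : J ≤ x), C J

theorem supIrredUnion_mono {L β : Type*} [SemilatticeSup L] (C : L → Set β) :
    Monotone (supIrredUnion C) := fun _ _ hxy =>
  Set.iUnion₂_mono fun _ _ => Set.iUnion_subset fun hJ =>
    Set.subset_iUnion_of_subset (hJ.trans hxy) subset_rfl

theorem subset_supIrredUnion {L β : Type*} [SemilatticeSup L] (C : L → Set β) {J x : L}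
    (hJ : SupIrred J) (hJx : J ≤ x) : C J ⊆ supIrredUnion C x :=
  Set.subset_iUnion₂_of_subset J hJ (Set.subset_iUnion_of_subset hJx subset_rfl)

section FiniteDistribLattice

variable {L : Type*} [DistribLattice L] [BoundedOrder L]
  (f : BoundedLatticeHom L (Submodule k V)) {C : L → Set V}

theorem le_span_supIrredUnion [WellFoundedLT L]
    (hC : ∀ J, (⨆ a < J, f a) ⊔ span k (C J) = f J) (x : L) :
    f x ≤ span k (supIrredUnion C x) := by
  induction x using WellFoundedLT.induction with
  | _ x ih =>
  have ih' : ∀ a < x, f a ≤ span k (supIrredUnion C x) := fun a ha =>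
    (ih a ha).trans (span_mono (supIrredUnion_mono C ha.le))
  by_cases hx : SupIrred x
  · rw [← hC x]
    exact sup_le (iSup₂_le ih') (span_mono (subset_supIrredUnion C hx le_rfl))
  · rcases not_supIrred.1 hx with hmin | ⟨a, b, rfl, ha, hb⟩
    · simp [hmin.eq_bot]
    · rw [map_sup]
      exact sup_le (ih' a ha) (ih' b hb)

theorem linearIndepOn_biUnion_supIrred
    (hC : ∀ J, LinearIndepOn k id (C J)) (hdisj : ∀ J, Disjoint (⨆ a < J, f a) (span k (C J)))
    (hle : ∀ J, span k (C J) ≤ f J) (t : Finset L) (ht : ∀ J ∈ t, SupIrred J) :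
    LinearIndepOn k id (⋃ J ∈ t, C J) := by
  classical
  induction t using Finset.strongInduction with
  | H t ih =>
  rcases t.eq_empty_or_nonempty with rfl | hne
  · simp
  obtain ⟨J, hJt, hJmax⟩ := t.exists_maximal hne
  have hsplit : ⋃ J' ∈ t, C J' = C J ∪ ⋃ J' ∈ t.erase J, C J' := by
    conv_lhs => rw [← Finset.insert_erase hJt]
    simp
  rw [hsplit]
  refine (hC J).id_union
    (ih _ (t.erase_ssubset hJt) fun J' hJ' => ht J' (t.mem_of_mem_erase hJ')) ?_
  have hlt : J ⊓ (t.erase J).sup id < J := by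
    refine inf_le_left.lt_of_ne fun heq => ?_
    obtain ⟨J', hJ', hJJ'⟩ := ((ht J hJt).supPrime.le_finset_sup).1 (inf_eq_left.1 heq)
    exact Finset.ne_of_mem_erase hJ' (le_antisymm (hJmax (t.mem_of_mem_erase hJ') hJJ') hJJ')
  have hrest : span k (⋃ J' ∈ t.erase J, C J') ≤ f ((t.erase J).sup id) := by
    rw [map_finset_sup]
    exact span_le.2 (Set.iUnion₂_subset fun J' hJ' => (span_le.1 (hle J')).trans
      (Finset.le_sup (f := f ∘ id) hJ'))
  have hmeet : span k (C J) ⊓ span k (⋃ J' ∈ t.erase J, C J') ≤ ⨆ a < J, f a :=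
    calc _ ≤ f J ⊓ f ((t.erase J).sup id) := inf_le_inf (hle J) hrest
      _ = f (J ⊓ (t.erase J).sup id) := (map_inf f _ _).symm
      _ ≤ ⨆ a < J, f a := le_iSup₂ (f := fun a _ => f a) _ hlt
  exact disjoint_iff_inf_le.2 ((le_inf inf_le_left hmeet).trans (hdisj J).symm.le_bot)

theorem BoundedLatticeHom.exists_linearIndepOn_forall_eq_span [Finite L] :
    ∃ B : Set V, LinearIndepOn k id B ∧ span k B = ⊤ ∧
      ∀ x, ∃ s ⊆ B, f x = span k s := by
  classical
  have := Fintype.ofFinite L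
  choose C hC hdisj hsup using fun J : L =>
    Submodule.exists_linearIndepOn_disjoint_sup_eq <|
      iSup₂_le fun a (ha : a < J) => OrderHomClass.mono f ha.le
  have hle (J : L) : span k (C J) ≤ f J := le_sup_right.trans_eq (hsup J)
  have hspan (x : L) : f x = span k (supIrredUnion C x) :=
    le_antisymm (le_span_supIrredUnion f hsup x) <| span_le.2 <|
      Set.iUnion₂_subset fun J _ => Set.iUnion_subset fun hJx =>
        span_le.1 ((hle J).trans (OrderHomClass.mono f hJx))
  have hB : LinearIndepOn k id (supIrredUnion C ⊤) := by
    simpa [supIrredUnion] using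
      linearIndepOn_biUnion_supIrred f hC hdisj hle (Finset.univ.filter SupIrred) (by simp)
  exact ⟨_, hB, by rw [← hspan, map_top],
    fun x => ⟨_, supIrredUnion_mono C le_top, hspan x⟩⟩

end FiniteDistribLattice

theorem IsDistribFamily.exists_linearIndepOn_forall_eq_span {S : Set (Submodule k V)}
    (hS : S.Finite) (h : IsDistribFamily S) (hbot : ⊥ ∈ S) (htop : ⊤ ∈ S) :
    ∃ B : Set V, LinearIndepOn k id B ∧ span k B = ⊤ ∧
      ∀ x, MemLatGen S x → ∃ s ⊆ B, x = span k s := by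
  let L := MemLatGen.sublattice S
  let _ := h.distribLattice
  let _ : BoundedOrder L := Subtype.boundedOrder (.base hbot) (.base htop)
  have : Finite L := Set.finite_univ_iff.1 <|
    (MemLatGen.finite_setOf (hS.preimage Subtype.val_injective.injOn)).subset
      fun y _ => y.2.preimage_val
  let f : BoundedLatticeHom L (Submodule k V) :=
    { L.subtype with map_top' := rfl, map_bot' := rfl }
  obtain ⟨B, hB, hspan, hf⟩ := f.exists_linearIndepOn_forall_eq_span
  exact ⟨B, hB, hspan, fun x hx => hf ⟨x, hx⟩⟩

end AdaptedBasis

theorem exists_adapted_basis_of_distributive_general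
    {k V : Type*} [Field k] [AddCommGroup V] [Module k V]
    (n : ℕ) (Vs : Fin n → Submodule k V)
    (h : IsDistribFamily (Set.range Vs)) :
    ∃ B : Set V, LinearIndependent k ((↑) : B → V) ∧ Submodule.span k B = ⊤ ∧
      ∀ i : Fin n, ∃ s ⊆ B, Vs i = Submodule.span k s := by
  obtain ⟨B, hB, hspan, hadapted⟩ := h.insert_bot_top.exists_linearIndepOn_forall_eq_span
    ((Set.finite_range Vs).insert _ |>.insert _) (by simp) (by simp)
  exact ⟨B, hB, hspan, fun i => hadapted _ (.base (by simp))⟩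

/-- If subspaces `V₁, …, Vₙ` of a finite-dimensional vector space `V` generate a
distributive lattice, then there is a basis `B` of `V` such that each `Vᵢ` is
spanned by a subset of `B`. -/
theorem exists_adapted_basis_of_distributive
    {k V : Type*} [Field k] [AddCommGroup V] [Module k V] [FiniteDimensional k V]
    (n : ℕ) (Vs : Fin n → Submodule k V)
    (h : IsDistribFamily (Set.range Vs)) :
    ∃ B : Set V, LinearIndependent k ((↑) : B → V) ∧ Submodule.span k B = ⊤ ∧
      ∀ i : Fin n, ∃ s ⊆ B, Vs i = Submodule.span k s :=
  exists_adapted_basis_of_distributive_general n Vs h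
end

section
/- If V_1, ..., V_n ⊆ V and V'_1, ..., V'_n ⊆ V' are two collections of subspaces each generating a distributive lattice, then the collection V_1 ⊗ V'_1, ..., V_n ⊗ V'_n of subspaces of V ⊗ V' generates a distributive lattice. -/
open TensorProduct

/-- For subspaces `p ⊆ V`, `q ⊆ V'`, the subspace `p ⊗ q ⊆ V ⊗ V'`, defined as the image
of the canonical map `p ⊗ q → V ⊗ V'`. -/
noncomputable def tensorSub {k V W : Type*} [Field k] [AddCommGroup V] [Module k V]
    [AddCommGroup W] [Module k W] (p : Submodule k V) (q : Submodule k W) :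
    Submodule k (V ⊗[k] W) :=
  LinearMap.range (TensorProduct.map p.subtype q.subtype)

/-!
A family of subspaces generating a distributive lattice admits an adapted basis: one such that
every member is spanned by a subset of it. By induction on the dimension, take a minimal nonzero
member `U` of the generated lattice; every generated subspace either contains `U` or meets it
trivially, and distributivity makes `X ↦ X ⊔ U` preserve meets, so the images in `V ⧸ U` again form
a distributive family and have an adapted basis `b'` there. Lifting each `b' j` into the
intersection of all members whose image contains it, and adding a basis of `U`, gives an adapted
basis of `V`.

Tensor products of adapted bases are adapted to the subspaces `Vᵢ ⊗ Wᵢ`, and subspaces spanned by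
subsets of a fixed basis generate a distributive lattice, being in the image of the lattice
homomorphism `A ↦ span (b '' A)` from the power set.
-/

section Lattice

variable {α β : Type*} [Lattice α] {S : Set α}

theorem MemLatGen.exists_of_image [Lattice β] {f : α → β} (hsup : ∀ a b, f (a ⊔ b) = f a ⊔ f b)
    (hinf : ∀ a b, MemLatGen S a → MemLatGen S b → f (a ⊓ b) = f a ⊓ f b) {y : β}
    (hy : MemLatGen (f '' S) y) : ∃ x, MemLatGen S x ∧ f x = y := by
  induction hy with
  | base hy => obtain ⟨x, hx, rfl⟩ := hy; exact ⟨x, .base hx, rfl⟩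
  | sup _ _ iha ihb =>
    obtain ⟨a, ha, rfl⟩ := iha
    obtain ⟨b, hb, rfl⟩ := ihb
    exact ⟨a ⊔ b, .sup ha hb, hsup a b⟩
  | inf _ _ iha ihb =>
    obtain ⟨a, ha, rfl⟩ := iha
    obtain ⟨b, hb, rfl⟩ := ihb
    exact ⟨a ⊓ b, .inf ha hb, hinf a b ha hb⟩

theorem IsDistribFamily.image [Lattice β] (hS : IsDistribFamily S) {f : α → β}
    (hsup : ∀ a b, f (a ⊔ b) = f a ⊔ f b)
    (hinf : ∀ a b, MemLatGen S a → MemLatGen S b → f (a ⊓ b) = f a ⊓ f b) :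
    IsDistribFamily (f '' S) := by
  intro a b c ha hb hc
  obtain ⟨x, hx, rfl⟩ := ha.exists_of_image hsup hinf
  obtain ⟨y, hy, rfl⟩ := hb.exists_of_image hsup hinf
  obtain ⟨z, hz, rfl⟩ := hc.exists_of_image hsup hinf
  rw [← hsup, ← hinf x _ hx (.sup hy hz), hS x y z hx hy hz, hsup, hinf x y hx hy,
    hinf x z hx hz]

theorem IsDistribFamily.sup_inf_left (hS : IsDistribFamily S) {x y z : α} (hx : MemLatGen S x)
    (hy : MemLatGen S y) (hz : MemLatGen S z) : x ⊔ y ⊓ z = (x ⊔ y) ⊓ (x ⊔ z) := by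
  rw [hS _ _ _ (.sup hx hy) hx hz, inf_eq_right.2 (le_sup_left : x ≤ x ⊔ y), inf_comm (x ⊔ y) z,
    hS _ _ _ hz hx hy, ← sup_assoc, sup_eq_left.2 (inf_le_right : z ⊓ x ≤ x), inf_comm z y]

theorem IsDistribFamily.of_subset_range [DistribLattice β] (f : LatticeHom β α)
    (hS : S ⊆ Set.range f) : IsDistribFamily S := by
  have hrange : ∀ a, MemLatGen S a → a ∈ Set.range f := by
    intro a ha
    induction ha with
    | base ha => exact hS ha
    | sup _ _ iha ihb =>
      obtain ⟨x, rfl⟩ := iha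
      obtain ⟨y, rfl⟩ := ihb
      exact ⟨x ⊔ y, map_sup f x y⟩
    | inf _ _ iha ihb =>
      obtain ⟨x, rfl⟩ := iha
      obtain ⟨y, rfl⟩ := ihb
      exact ⟨x ⊓ y, map_inf f x y⟩
  intro a b c ha hb hc
  obtain ⟨x, rfl⟩ := hrange a ha
  obtain ⟨y, rfl⟩ := hrange b hb
  obtain ⟨z, rfl⟩ := hrange c hc
  simp only [← map_sup, ← map_inf, inf_sup_left]

theorem exists_memLatGen_ne_bot_inf_eq_bot_or_le [OrderBot α] [WellFoundedLT α]
    (h : ∃ a ∈ S, a ≠ ⊥) : ∃ u, MemLatGen S u ∧ u ≠ ⊥ ∧ ∀ x, MemLatGen S x → x ⊓ u = ⊥ ∨ u ≤ x := by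
  obtain ⟨a, ha, ha0⟩ := h
  obtain ⟨u, ⟨hu, hu0⟩, hmin⟩ :=
    wellFounded_lt.has_min {x | MemLatGen S x ∧ x ≠ ⊥} ⟨a, .base ha, ha0⟩
  refine ⟨u, hu, hu0, fun x hx => or_iff_not_imp_left.2 fun hxu => ?_⟩
  have hnlt : ¬x ⊓ u < u := hmin _ ⟨.inf hx hu, hxu⟩
  exact inf_eq_right.1 (inf_le_right.lt_or_eq.resolve_left hnlt)

theorem map_finsetInf_of_memLatGen [OrderTop α] [Lattice β] [OrderTop β] {f : α → β}
    (htop : f ⊤ = ⊤) (hinf : ∀ a b, MemLatGen S a → MemLatGen S b → f (a ⊓ b) = f a ⊓ f b)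
    {ι : Type*} {g : ι → α} (hg : ∀ i, MemLatGen S (g i)) (s : Finset ι) :
    f (s.inf g) = s.inf (f ∘ g) := by
  classical
  induction s using Finset.induction_on with
  | empty => exact htop
  | insert i s _ ih =>
    rw [Finset.inf_insert, Finset.inf_insert, ← ih]
    rcases s.eq_empty_or_nonempty with rfl | hs
    · simp [htop]
    · rw [← Finset.inf'_eq_inf hs]
      exact hinf _ _ (hg i)
        (Finset.inf'_induction hs _ (fun _ ha _ hb => .inf ha hb) fun j _ => hg j)

end Lattice

section LinearAlgebra

open Submodule

variable {R M : Type*} [Ring R] [AddCommGroup M] [Module R M]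

theorem Submodule.map_mkQ_inf {U X Y : Submodule R M} (h : U ⊔ X ⊓ Y = (U ⊔ X) ⊓ (U ⊔ Y)) :
    (X ⊓ Y).map U.mkQ = X.map U.mkQ ⊓ Y.map U.mkQ :=
  comap_injective_of_surjective U.mkQ_surjective <| by
    rw [comap_inf, comap_map_mkQ, comap_map_mkQ, comap_map_mkQ, h]

theorem exists_preimage_mem_of_map_finsetInf {N : Type*} [AddCommGroup N] [Module R N]
    {ι : Type*} [Fintype ι] {f : M →ₗ[R] N} {Vs : ι → Submodule R M}
    (hf : ∀ s : Finset ι, (s.inf Vs).map f = s.inf fun i => (Vs i).map f) (y : N) :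
    ∃ x, f x = y ∧ ∀ i, y ∈ (Vs i).map f → x ∈ Vs i := by
  classical
  let s := Finset.univ.filter fun i => y ∈ (Vs i).map f
  have hy : y ∈ (s.inf Vs).map f := by
    rw [hf, mem_finsetInf]
    exact fun i hi => (Finset.mem_filter.1 hi).2
  obtain ⟨x, hx, hxy⟩ := hy
  refine ⟨x, hxy, fun i hi => ?_⟩
  have hi : i ∈ s := Finset.mem_filter.2 ⟨Finset.mem_univ i, hi⟩
  exact Finset.inf_le (f := Vs) hi hx

namespace Module.Basis

variable {ι : Type*}

def spanImage (b : Basis ι R M) : LatticeHom (Set ι) (Submodule R M) where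
  toFun A := span R (b '' A)
  map_sup' A B := by simp only [Set.sup_eq_union, Set.image_union, span_union]
  map_inf' A B := by
    ext
    simp only [Set.inf_eq_inter, mem_inf, b.mem_span_image, Set.subset_inter_iff]

theorem spanImage_apply (b : Basis ι R M) (A : Set ι) : b.spanImage A = span R (b '' A) := rfl

def IsAdapted (b : Basis ι R M) (p : Submodule R M) : Prop :=
  p ∈ Set.range b.spanImage

section SumQuotLift

variable {m n : Type*} {U : Submodule R M} (bU : Basis m R U) (bQ : Basis n R (M ⧸ U))
  {x : n → M} (hx : ∀ j, U.mkQ (x j) = bQ j)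

include hx in
theorem sup_span_image_eq_comap_span_image (A : Set n) :
    U ⊔ span R (x '' A) = (span R (bQ '' A)).comap U.mkQ := by
  rw [← comap_map_mkQ, map_span, Set.image_image]
  simp only [hx]

theorem span_range_coe : span R (Set.range fun i => (bU i : M)) = U := by
  rw [Set.range_comp' Subtype.val bU, ← U.coe_subtype, ← map_span, bU.span_eq,
    Submodule.map_top, range_subtype]

noncomputable def sumQuotLift : Basis (m ⊕ n) R M :=
  Basis.mk (v := Sum.elim (fun i => (bU i : M)) x)
    (bU.linearIndependent.sumElim_of_quotient x <| by
      convert bQ.linearIndependent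
      exact funext hx)
    (by
      rw [Set.Sum.elim_range, span_union, span_range_coe, ← Set.image_univ,
        sup_span_image_eq_comap_span_image bQ hx, Set.image_univ, bQ.span_eq, comap_top])

theorem coe_sumQuotLift : ⇑(sumQuotLift bU bQ hx) = Sum.elim (fun i => (bU i : M)) x :=
  Basis.coe_mk _ _

theorem isAdapted_sumQuotLift {X : Submodule R M} (hXU : X ⊓ U = ⊥ ∨ U ≤ X) {A : Set n}
    (hXA : X.map U.mkQ = span R (bQ '' A)) (hxX : ∀ j ∈ A, x j ∈ X) :
    (sumQuotLift bU bQ hx).IsAdapted X := by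
  have hspan_inr : (sumQuotLift bU bQ hx).spanImage (Sum.inr '' A) = span R (x '' A) := by
    rw [spanImage_apply, coe_sumQuotLift, Set.image_image]
    rfl
  have hspan_inl : (sumQuotLift bU bQ hx).spanImage (Set.range Sum.inl) = U := by
    rw [spanImage_apply, coe_sumQuotLift, ← Set.range_comp]
    exact span_range_coe bU
  have hle : span R (x '' A) ≤ X := span_le.2 (Set.image_subset_iff.2 hxX)
  have hX_le : X ≤ span R (x '' A) ⊔ U := by
    rw [sup_comm, sup_span_image_eq_comap_span_image bQ hx, ← hXA]
    exact le_comap_map _ _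
  -- modular law
  have hX : X = span R (x '' A) ⊔ X ⊓ U := by
    rw [inf_comm, ← sup_inf_assoc_of_le _ hle, inf_eq_right.2 hX_le]
  rcases hXU with hXU | hUX
  · exact ⟨Sum.inr '' A, by rw [hspan_inr, hX, hXU, sup_bot_eq]⟩
  · refine ⟨Sum.inr '' A ⊔ Set.range Sum.inl, ?_⟩
    rw [SupHomClass.map_sup, hspan_inr, hspan_inl, hX, inf_eq_right.2 hUX]

end SumQuotLift

end Module.Basis

end LinearAlgebra

section Field

open Submodule Module

variable {k V W : Type*} [Field k] [AddCommGroup V] [Module k V] [AddCommGroup W] [Module k W]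

theorem tensorSub_span (s : Set V) (t : Set W) :
    tensorSub (span k s) (span k t) = span k (Set.image2 (· ⊗ₜ ·) s t) :=
  (range_mapIncl _ _).trans (map₂_span_span _ _ _ _)

theorem Module.Basis.IsAdapted.tensorSub {ι κ : Type*} {b : Basis ι k V} {c : Basis κ k W}
    {p : Submodule k V} {q : Submodule k W} (hp : b.IsAdapted p) (hq : c.IsAdapted q) :
    (b.tensorProduct c).IsAdapted (_root_.tensorSub p q) := by
  obtain ⟨A, rfl⟩ := hp
  obtain ⟨B, rfl⟩ := hq
  refine ⟨A ×ˢ B, ?_⟩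
  rw [Basis.spanImage_apply, Basis.spanImage_apply, Basis.spanImage_apply, tensorSub_span,
    Set.image2_image_left, Set.image2_image_right, ← Set.image_prod]
  congr 2
  funext ij
  exact b.tensorProduct_apply c ij.1 ij.2

theorem IsDistribFamily.exists_basis_isAdapted {ι : Type*} [Finite ι] [FiniteDimensional k V]
    (Vs : ι → Submodule k V) (hV : IsDistribFamily (Set.range Vs)) :
    ∃ (κ : Type) (b : Basis κ k V), ∀ i, b.IsAdapted (Vs i) := by
  have := Fintype.ofFinite ι
  induction hd : finrank k V using Nat.strong_induction_on generalizing V with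
  | _ d IH =>
    by_cases hbot : ∀ i, Vs i = ⊥
    · refine ⟨_, finBasis k V, fun i => ⟨∅, ?_⟩⟩
      rw [hbot i, Basis.spanImage_apply, Set.image_empty, span_empty]
    push Not at hbot
    obtain ⟨i₀, hi₀⟩ := hbot
    obtain ⟨U, hU, hU0, hdich⟩ :=
      exists_memLatGen_ne_bot_inf_eq_bot_or_le (S := Set.range Vs) ⟨_, ⟨i₀, rfl⟩, hi₀⟩
    have hinf : ∀ X Y, MemLatGen (Set.range Vs) X → MemLatGen (Set.range Vs) Y →
        (X ⊓ Y).map U.mkQ = X.map U.mkQ ⊓ Y.map U.mkQ :=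
      fun X Y hX hY => map_mkQ_inf (hV.sup_inf_left hU hX hY)
    have hmap : ∀ s : Finset ι, (s.inf Vs).map U.mkQ = s.inf fun i => (Vs i).map U.mkQ :=
      map_finsetInf_of_memLatGen (by rw [Submodule.map_top, range_mkQ]) hinf
        fun i => .base ⟨i, rfl⟩
    have hQ : IsDistribFamily (Set.range fun i => (Vs i).map U.mkQ) := by
      rw [Set.range_comp']
      exact hV.image (fun X Y => map_sup X Y _) hinf
    have hlt : finrank k (V ⧸ U) < d := by
      have := U.finrank_quotient_add_finrank
      have : finrank k U ≠ 0 := fun h => hU0 (finrank_eq_zero.1 h)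
      omega
    obtain ⟨κ, bQ, hbQ⟩ := IH _ hlt _ hQ rfl
    choose A hA using hbQ
    choose x hx hxV using exists_preimage_mem_of_map_finsetInf hmap
    refine ⟨_, (finBasis k U).sumQuotLift bQ (x := fun j => x (bQ j)) fun j => hx _, fun i =>
      Basis.isAdapted_sumQuotLift _ _ _ (hdich _ (.base ⟨i, rfl⟩)) (hA i).symm fun j hj => ?_⟩
    refine hxV _ i ?_
    rw [← hA i]
    exact subset_span (Set.mem_image_of_mem _ hj)

end Field

/-- If `V₁, …, Vₙ ⊆ V` and `V'₁, …, V'ₙ ⊆ V'` each generate distributive lattices, then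
`V₁ ⊗ V'₁, …, Vₙ ⊗ V'ₙ ⊆ V ⊗ V'` generate a distributive lattice. -/
theorem tensor_distributive_of_distributive
    {k V W : Type*} [Field k] [AddCommGroup V] [Module k V] [FiniteDimensional k V]
    [AddCommGroup W] [Module k W] [FiniteDimensional k W]
    (n : ℕ) (Vs : Fin n → Submodule k V) (Ws : Fin n → Submodule k W)
    (hV : IsDistribFamily (Set.range Vs)) (hW : IsDistribFamily (Set.range Ws)) :
    IsDistribFamily (Set.range fun i : Fin n => tensorSub (Vs i) (Ws i)) := by
  obtain ⟨_, b, hb⟩ := hV.exists_basis_isAdapted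
  obtain ⟨_, c, hc⟩ := hW.exists_basis_isAdapted
  exact .of_subset_range (b.tensorProduct c).spanImage
    (Set.range_subset_iff.2 fun i => (hb i).tensorSub (hc i))
end

section
/- Let A be a finite-dimensional k-algebra and I a heredity ideal of A (i.e., I² = I, I is projective as a right A-module, and I·rad(A)·I = 0). Then the category of finite-dimensional A/I-modules is closed under extensions inside the category of finite-dimensional A-modules. -/
/-- Let `A` be a finite-dimensional `k`-algebra and `I` a heredity ideal of `A`
(`I² = I`, `I` projective as a right `A`-module, `I·rad(A)·I = 0`).  Then the finite-dimensional
`A/I`-modules (i.e. `A`-modules annihilated by `I`) are closed under extensions among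
finite-dimensional `A`-modules. -/
theorem heredity_ideal_modules_closed_under_extensions
    {k A : Type*} [Field k] [Ring A] [Algebra k A] [FiniteDimensional k A]
    -- `I` is a right ideal of `A` ...
    (I : Submodule Aᵐᵒᵖ A)
    -- ... which is also a left ideal, hence a two-sided ideal
    (hleft : ∀ a ∈ I, ∀ b : A, b * a ∈ I)
    -- `I` is idempotent: every element of `I` is a sum of products of elements of `I`
    (hI2 : ∀ x ∈ I, ∃ (n : ℕ) (u v : Fin n → A),
      (∀ i, u i ∈ I ∧ v i ∈ I) ∧ x = ∑ i, u i * v i)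
    -- `I` is projective as a right `A`-module
    (hproj : Module.Projective Aᵐᵒᵖ ↥I)
    -- `I · rad(A) · I = 0`, where `rad(A)` is the Jacobson radical of `A`
    (hrad : ∀ x ∈ I, ∀ r ∈ (⊥ : Ideal A).jacobson, ∀ y ∈ I, x * r * y = 0)
    {M N E : Type*}
    [AddCommGroup M] [Module A M] [AddCommGroup N] [Module A N] [AddCommGroup E] [Module A E]
    -- the modules are finite-dimensional over `k`
    [Module k M] [IsScalarTower k A M] [FiniteDimensional k M]
    [Module k N] [IsScalarTower k A N] [FiniteDimensional k N]
    [Module k E] [IsScalarTower k A E] [FiniteDimensional k E]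
    -- a short exact sequence of `A`-modules `0 → M → E → N → 0`
    (f : M →ₗ[A] E) (g : E →ₗ[A] N)
    (hf : Function.Injective f) (hg : Function.Surjective g)
    (hexact : LinearMap.range f = LinearMap.ker g)
    -- `M` and `N` are `A/I`-modules, i.e. annihilated by `I`
    (hM : ∀ a ∈ I, ∀ m : M, a • m = 0) (hN : ∀ a ∈ I, ∀ x : N, a • x = 0) :
    -- then `E` is an `A/I`-module as well
    ∀ a ∈ I, ∀ e : E, a • e = 0 := by
  intro a ha e
  obtain ⟨n, u, v, huv, hsum⟩ := hI2 a ha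
  have key : ∀ i : Fin n, (u i * v i) • e = 0 := by
    intro i
    -- v i • e lies in ker g since I kills N
    have hker : (v i) • e ∈ LinearMap.ker g := by
      rw [LinearMap.mem_ker, map_smul]
      exact hN _ (huv i).2 _
    rw [← hexact] at hker
    obtain ⟨m, hm⟩ := hker
    rw [mul_smul, ← hm, ← map_smul, hM _ (huv i).1, map_zero]
  rw [hsum]
  have : (∑ i, u i * v i) • e = ∑ i : Fin n, (u i * v i) • e := Finset.sum_smul
  rw [this]
  exact Finset.sum_eq_zero fun i _ => key i
end

section
/- Let Λ = ⟨r_1, …, r_{d−1}, r_d^{±1}⟩ be the group-completion-at-r_d of the free monoid on d generators, equipped with the minimal left- and right-invariant partial order generated by r_{a+b} < r_a r_b and 1 < r_a r_d^{-1} r_{d−a} for a,b ≥ 1, a+b ≤ d. Then for every λ ∈ Λ the set {μ ∈ Λ : μ < λ} is finite. -/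
/-- The relations inverting `r_d` in the free monoid on `r_1, …, r_d, r_d⁻¹`.
Generator `⟨a⟩` for `a < d` is `r_{a+1}`, and generator `⟨d⟩` is `r_d⁻¹`. -/
def lamRels (d : ℕ) : FreeMonoid (Fin (d + 1)) → FreeMonoid (Fin (d + 1)) → Prop :=
  fun x y =>
    (x = FreeMonoid.of ⟨d - 1, by omega⟩ * FreeMonoid.of ⟨d, by omega⟩ ∧ y = 1) ∨
    (x = FreeMonoid.of ⟨d, by omega⟩ * FreeMonoid.of ⟨d - 1, by omega⟩ ∧ y = 1)

/-- The monoid `Λ = ⟨r_1, …, r_{d−1}, r_d^{±1}⟩`, obtained from the free monoid on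
`r_1, …, r_d` by inverting `r_d`. -/
abbrev Lam (d : ℕ) := (conGen (lamRels d)).Quotient

/-- The generator `r_a ∈ Λ` for `1 ≤ a ≤ d`, with the convention `r_0 = 1`. -/
def lamGen (d a : ℕ) : Lam d :=
  if a = 0 then 1
  else if h : a ≤ d then (conGen (lamRels d)).mk' (FreeMonoid.of ⟨a - 1, by omega⟩)
  else 1

/-- The inverse generator `r_d⁻¹ ∈ Λ`. -/
def lamGenInv (d : ℕ) : Lam d := (conGen (lamRels d)).mk' (FreeMonoid.of ⟨d, by omega⟩)

/-- One step of the left- and right-invariant order on `Λ` generated by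
`r_{a+b} < r_a r_b` and `1 < r_a r_d⁻¹ r_{d−a}` for `a, b ≥ 1`, `a + b ≤ d`. -/
def lamBaseRel (d : ℕ) : Lam d → Lam d → Prop := fun x y =>
  ∃ w w' : Lam d,
    (∃ a b : ℕ, 1 ≤ a ∧ 1 ≤ b ∧ a + b ≤ d ∧
      x = w * lamGen d (a + b) * w' ∧ y = w * lamGen d a * lamGen d b * w') ∨
    (∃ a : ℕ, 1 ≤ a ∧ a + 1 ≤ d ∧
      x = w * w' ∧ y = w * lamGen d a * lamGenInv d * lamGen d (d - a) * w')

/-! Every relation `r_{a+b} < r_a r_b` and `1 < r_a r_d⁻¹ r_{d−a}` strictly lengthens the reduced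
word, because the letters `r_1, …, r_{d−1}` never cancel and so split a product into
independently reduced pieces. Hence everything below `λ` has a reduced word shorter than that
of `λ`, and there are finitely many such words. -/

namespace WordReduction

variable {α : Type*} (R : α → α → Prop) [DecidableRel R]

def push (a : α) : List α → List α
  | [] => [a]
  | b :: t => if R a b then t else a :: b :: t

def reduce (l : List α) : List α := l.foldr (push R) []

def IsReduced (l : List α) : Prop := l.IsChain fun a b => ¬ R a b

variable {R}

theorem reduce_cons (a : α) (l : List α) : reduce R (a :: l) = push R a (reduce R l) := rfl

theorem push_cons_of_rel {a b : α} (h : R a b) (t : List α) : push R a (b :: t) = t := by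
  simp [push, h]

theorem push_cons_of_not_rel {a b : α} (h : ¬ R a b) (t : List α) :
    push R a (b :: t) = a :: b :: t := by
  simp [push, h]

theorem isReduced_push {r : List α} (hr : IsReduced R r) (a : α) : IsReduced R (push R a r) := by
  match r with
  | [] => exact List.isChain_singleton a
  | b :: t =>
    by_cases h : R a b
    · rw [push_cons_of_rel h]
      exact List.IsChain.tail hr
    · rw [push_cons_of_not_rel h]
      exact List.isChain_cons_cons.mpr ⟨h, hr⟩

theorem isReduced_foldr_push {s : List α} (hs : IsReduced R s) (l : List α) :
    IsReduced R (l.foldr (push R) s) := by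
  induction l with
  | nil => exact hs
  | cons a l ih => exact isReduced_push ih a

theorem isReduced_reduce (l : List α) : IsReduced R (reduce R l) :=
  isReduced_foldr_push List.isChain_nil l

theorem length_push_le (a : α) (r : List α) : (push R a r).length ≤ r.length + 1 := by
  match r with
  | [] => simp [push]
  | b :: t => by_cases h : R a b <;> simp [push, h, Nat.le_succ_of_le]

theorem length_foldr_push_le (s l : List α) :
    (l.foldr (push R) s).length ≤ l.length + s.length := by
  induction l with
  | nil => simp
  | cons a l ih =>
    grw [List.foldr_cons, length_push_le, ih, List.length_cons]
    omega

theorem foldr_push_cons_of_not_rel {c : α} (hc : ∀ x, ¬ R x c) {t : List α}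
    (ht : IsReduced R t) (s : List α) : t.foldr (push R) (c :: s) = t ++ c :: s := by
  induction t with
  | nil => rfl
  | cons e t ih =>
    rw [List.foldr_cons, ih (List.IsChain.tail ht)]
    match t with
    | [] => exact push_cons_of_not_rel (hc e) s
    | f :: _ => exact push_cons_of_not_rel (List.isChain_cons_cons.mp ht).1 _

section Confluence

-- The only overlap `a b c` of two cancellations is resolved when `a = c`.
variable (hR : ∀ a b c, R a b → R b c → a = c)
include hR

theorem push_push {a b : α} (hab : R a b) {r : List α} (hr : IsReduced R r) :
    push R a (push R b r) = r := by
  match r with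
  | [] => rw [push, push_cons_of_rel hab]
  | [c] =>
    by_cases hbc : R b c
    · rw [push_cons_of_rel hbc, push, hR a b c hab hbc]
    · rw [push_cons_of_not_rel hbc, push_cons_of_rel hab]
  | c :: e :: t =>
    by_cases hbc : R b c
    · rw [push_cons_of_rel hbc, hR a b c hab hbc,
        push_cons_of_not_rel (List.isChain_cons_cons.mp hr).1]
    · rw [push_cons_of_not_rel hbc, push_cons_of_rel hab]

theorem foldr_push_push {s : List α} (hs : IsReduced R s) (a : α) (t : List α) :
    (push R a t).foldr (push R) s = push R a (t.foldr (push R) s) := by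
  match t with
  | [] => rfl
  | b :: t =>
    by_cases h : R a b
    · rw [push_cons_of_rel h, List.foldr_cons, push_push hR h (isReduced_foldr_push hs t)]
    · rw [push_cons_of_not_rel h]
      rfl

theorem foldr_push_reduce {s : List α} (hs : IsReduced R s) (l : List α) :
    (reduce R l).foldr (push R) s = l.foldr (push R) s := by
  induction l with
  | nil => rfl
  | cons a l ih => rw [reduce_cons, foldr_push_push hR hs, ih, List.foldr_cons]

theorem reduce_append (u v : List α) :
    reduce R (u ++ v) = (reduce R u).foldr (push R) (reduce R v) := by
  rw [foldr_push_reduce hR (isReduced_reduce v), reduce, List.foldr_append, reduce]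

theorem length_reduce_append_le (u v : List α) :
    (reduce R (u ++ v)).length ≤ (reduce R u).length + (reduce R v).length := by
  rw [reduce_append hR]
  exact length_foldr_push_le _ _

theorem reduce_append_cons_of_inert {c : α} (hc : ∀ x, ¬ R c x ∧ ¬ R x c) (u v : List α) :
    reduce R (u ++ c :: v) = reduce R u ++ c :: reduce R v := by
  have push_c : ∀ r, push R c r = c :: r := fun
    | [] => rfl
    | b :: t => push_cons_of_not_rel (hc b).1 t
  rw [reduce_append hR, reduce_cons, push_c]
  exact foldr_push_cons_of_not_rel (fun x => (hc x).2) (isReduced_reduce u) _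

end Confluence

variable (R) in
def reduceCon (hR : ∀ a b c, R a b → R b c → a = c) : Con (FreeMonoid α) where
  r x y := reduce R x.toList = reduce R y.toList
  iseqv := ⟨fun _ => rfl, Eq.symm, Eq.trans⟩
  mul' {w x y z} h₁ h₂ := by
    simp only [FreeMonoid.toList_mul, reduce_append hR] at h₁ h₂ ⊢
    rw [h₁, h₂]

section Congruence

variable (c : Con (FreeMonoid α)) (hc : ∀ a b, R a b → c (.of a * .of b) 1)
include hc

theorem rel_push (a : α) (r : List α) :
    c (.of a * .ofList r) (.ofList (push R a r)) := by
  match r with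
  | [] => exact c.refl _
  | b :: t =>
    by_cases h : R a b
    · rw [push_cons_of_rel h]
      exact c.mul (hc a b h) (c.refl (.ofList t))
    · rw [push_cons_of_not_rel h]
      exact c.refl _

theorem rel_reduce (l : List α) : c (.ofList l) (.ofList (reduce R l)) := by
  induction l with
  | nil => exact c.refl _
  | cons a l ih => exact c.trans (c.mul (c.refl (.of a)) ih) (rel_push c hc a _)

end Congruence

end WordReduction

open WordReduction

abbrev lamCancel (d : ℕ) (a b : Fin (d + 1)) : Prop :=
  (a.1 = d - 1 ∧ b.1 = d) ∨ (a.1 = d ∧ b.1 = d - 1)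

theorem lamCancel_cancel {d : ℕ} (a b c : Fin (d + 1)) (h₁ : lamCancel d a b)
    (h₂ : lamCancel d b c) : a = c :=
  Fin.ext (by omega)

theorem not_lamCancel_of_lt {d : ℕ} {a : Fin (d + 1)} (ha : a.1 + 1 < d) (x : Fin (d + 1)) :
    ¬ lamCancel d a x ∧ ¬ lamCancel d x a := by
  omega

theorem conGen_lamRels_le (d : ℕ) :
    conGen (lamRels d) ≤ reduceCon (lamCancel d) lamCancel_cancel :=
  Con.conGen_le.2 fun x y h => by
    rcases h with ⟨rfl, rfl⟩ | ⟨rfl, rfl⟩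
    · exact push_cons_of_rel (R := lamCancel d) (Or.inl ⟨rfl, rfl⟩) []
    · exact push_cons_of_rel (R := lamCancel d) (Or.inr ⟨rfl, rfl⟩) []

theorem conGen_lamRels_of_lamCancel {d : ℕ} (a b : Fin (d + 1)) (h : lamCancel d a b) :
    conGen (lamRels d) (.of a * .of b) 1 := by
  obtain ⟨a, ha⟩ := a
  obtain ⟨b, hb⟩ := b
  simp only [lamCancel] at h
  apply ConGen.Rel.of
  rcases h with ⟨rfl, rfl⟩ | ⟨rfl, rfl⟩
  exacts [Or.inl ⟨rfl, rfl⟩, Or.inr ⟨rfl, rfl⟩]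

namespace Lam

variable {d : ℕ}

def nf (q : Lam d) : List (Fin (d + 1)) :=
  Con.liftOn q (fun w => reduce (lamCancel d) w.toList) fun _ _ h => conGen_lamRels_le d h

def len (q : Lam d) : ℕ := (nf q).length

theorem coe_ofList_nf (q : Lam d) : (FreeMonoid.ofList (nf q) : Lam d) = q :=
  Con.induction_on q fun w =>
    ((Con.eq _).2 (rel_reduce _ conGen_lamRels_of_lamCancel w.toList)).symm

theorem len_coe (w : FreeMonoid (Fin (d + 1))) :
    len (w : Lam d) = (reduce (lamCancel d) w.toList).length := rfl

theorem len_one : len (1 : Lam d) = 0 := rfl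

theorem len_lamGenInv : len (lamGenInv d) = 1 := rfl

theorem len_mul_le (x y : Lam d) : len (x * y) ≤ len x + len y :=
  Con.induction_on₂ x y fun u v => by
    rw [← Con.coe_mul]
    exact length_reduce_append_le lamCancel_cancel u.toList v.toList

theorem len_lamGen_le (a : ℕ) : len (lamGen d a) ≤ 1 := by
  unfold lamGen
  split_ifs
  exacts [Nat.zero_le 1, le_rfl, Nat.zero_le 1]

theorem lamGen_eq_coe_of {a : ℕ} (ha : 1 ≤ a) (had : a ≤ d) :
    lamGen d a = (FreeMonoid.of (⟨a - 1, by omega⟩ : Fin (d + 1)) : Lam d) := by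
  rw [lamGen, if_neg (by omega), dif_pos had]
  rfl

theorem len_mul_lamGen_mul {a : ℕ} (ha : 1 ≤ a) (had : a < d) (x y : Lam d) :
    len (x * lamGen d a * y) = len x + 1 + len y :=
  Con.induction_on₂ x y fun u v => by
    have hinert := not_lamCancel_of_lt (d := d) (a := ⟨a - 1, by omega⟩) (by dsimp only; omega)
    rw [lamGen_eq_coe_of ha had.le, ← Con.coe_mul, ← Con.coe_mul, len_coe, len_coe, len_coe,
      FreeMonoid.toList_mul, FreeMonoid.toList_mul, FreeMonoid.toList_of, List.append_assoc,
      List.singleton_append, reduce_append_cons_of_inert lamCancel_cancel hinert,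
      List.length_append, List.length_cons]
    omega

theorem len_lamGen_mul {a : ℕ} (ha : 1 ≤ a) (had : a < d) (y : Lam d) :
    len (lamGen d a * y) = 1 + len y := by
  simpa [len_one] using len_mul_lamGen_mul ha had 1 y

theorem len_lt_of_lamBaseRel {x y : Lam d} (h : lamBaseRel d x y) : len x < len y := by
  obtain ⟨w, w', ⟨a, b, ha, hb, hab, rfl, rfl⟩ | ⟨a, ha, had, rfl, rfl⟩⟩ := h
  · have hy : len (w * lamGen d a * lamGen d b * w') = len w + 1 + (1 + len w') := by
      rw [mul_assoc _ (lamGen d b), len_mul_lamGen_mul ha (by omega), len_lamGen_mul hb (by omega)]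
    have hx : len (w * lamGen d (a + b) * w') ≤ len w + 1 + len w' := by
      grw [len_mul_le, len_mul_le, len_lamGen_le]
    omega
  · have hy : len (w * lamGen d a * lamGenInv d * lamGen d (d - a) * w') =
        len w + 1 + (1 + 1 + len w') := by
      rw [mul_assoc _ (lamGenInv d), mul_assoc _ (lamGenInv d * _),
        len_mul_lamGen_mul ha (by omega), len_mul_lamGen_mul (by omega) (by omega), len_lamGenInv]
    have hx := len_mul_le w w'
    omega

theorem len_lt_of_transGen {x y : Lam d} (h : Relation.TransGen (lamBaseRel d) x y) :
    len x < len y := by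
  simpa only [Relation.transGen_eq_self] using
    Relation.TransGen.lift len (fun _ _ => len_lt_of_lamBaseRel) x y h

theorem finite_setOf_len_lt (n : ℕ) : {q : Lam d | len q < n}.Finite :=
  ((List.finite_length_lt _ n).image fun l => (FreeMonoid.ofList l : Lam d)).subset
    fun q hq => ⟨nf q, hq, coe_ofList_nf q⟩

end Lam

theorem lam_lower_set_finite_general (d : ℕ) (lam : Lam d) :
    {μ : Lam d | Relation.TransGen (lamBaseRel d) μ lam}.Finite :=
  (Lam.finite_setOf_len_lt (Lam.len lam)).subset fun _ => Lam.len_lt_of_transGen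

/-- For every `λ ∈ Λ = ⟨r_1, …, r_{d−1}, r_d^{±1}⟩`, with the minimal left- and
right-invariant partial order generated by `r_{a+b} < r_a r_b` and
`1 < r_a r_d⁻¹ r_{d−a}`, the set `{μ ∈ Λ : μ < λ}` is finite. -/
theorem lam_lower_set_finite (d : ℕ) (hd : 1 ≤ d) (lam : Lam d) :
    {μ : Lam d | Relation.TransGen (lamBaseRel d) μ lam}.Finite :=
  lam_lower_set_finite_general d lam
end
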